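/- (Lemma 5.1, symmetric Dirichlet case.) Let B ≥ 0, let c > 0 satisfy c⁴ + Bc³ − 1 = 0, and let P, Q ∈ ℝ^{d×d} be symmetric positive definite matrices with ‖P − P⁻³‖ ≤ B and ‖Q − Q⁻³‖ ≤ B (Frobenius norm, P⁻³ = (P⁻¹)³). Then ‖(P − P⁻³) − (Q − Q⁻³)‖ ≤ (1 + 3√d/c⁴) ‖P − Q‖. In other words, the gradient ∇f_D(X) = X − X⁻³ of the symmetric Dirichlet energy is locally Lipschitz on symmetric positive definite matrices with explicit constant F = 1 + 3√d/c⁴. -/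

import Mathlib

/-!
If `P v = λ v` then `(P - P⁻³) v = (λ - λ⁻³) v`, so `|λ - λ⁻³| ≤ ‖P - P⁻³‖ ≤ B`; since `x ↦ x⁻³ - x` is decreasing on `(0, ∞)` and equals `B` at `c`,
every eigenvalue of `P` is at least `c`. Diagonalizing `P` orthogonally, multiplication by `P⁻¹`
on either side shrinks the Frobenius norm by the factor `c⁻¹`, and the same holds for `Q`. Finally
`P⁻³ - Q⁻³ = P⁻³(Q - P)Q⁻¹ + P⁻²(Q - P)Q⁻² + P⁻¹(Q - P)Q⁻³`, so
`‖P⁻³ - Q⁻³‖ ≤ 3c⁻⁴‖P - Q‖`, and the triangle inequality finishes the proof.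
-/

open Matrix

noncomputable def frobNorm {d : ℕ} (X : Matrix (Fin d) (Fin d) ℝ) : ℝ :=
  Real.sqrt (Matrix.trace (Xᵀ * X))

attribute [local instance] Matrix.frobeniusNormedAddCommGroup Matrix.frobeniusNormSMulClass

theorem norm_iterate_le {E : Type*} [SeminormedAddCommGroup E] {f : E → E} {k : ℝ} (hk : 0 ≤ k)
    (hf : ∀ x, ‖f x‖ ≤ k * ‖x‖) (i : ℕ) (x : E) : ‖f^[i] x‖ ≤ k ^ i * ‖x‖ := by
  induction i generalizing x with
  | zero => simp
  | succ i ih =>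
    rw [Function.iterate_succ_apply, pow_succ, mul_assoc]
    exact (ih (f x)).trans (by gcongr; exact hf x)

theorem le_of_abs_sub_inv_pow_three_le {B c x : ℝ} (hc : 0 < c)
    (hroot : c ^ 4 + B * c ^ 3 - 1 = 0) (hx : 0 < x) (h : |x - x⁻¹ ^ 3| ≤ B) : c ≤ x := by
  by_contra! hxc
  have hB : c⁻¹ ^ 3 - c = B := by
    field_simp
    linarith
  have hinv : c⁻¹ ^ 3 < x⁻¹ ^ 3 := by gcongr
  linarith [neg_le_of_abs_le h]

namespace Matrix

variable {m n : Type*} [Fintype m] [Fintype n]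

theorem frobenius_norm_le_of_norm_apply_le {α : Type*} [NormedAddCommGroup α]
    {X Y : Matrix m n α} (h : ∀ i j, ‖X i j‖ ≤ ‖Y i j‖) : ‖X‖ ≤ ‖Y‖ := by
  rw [frobenius_norm_def, frobenius_norm_def]
  gcongr with i _ j _
  exact h i j

theorem frobenius_norm_eq_sqrt_trace (X : Matrix m n ℝ) : ‖X‖ = √(trace (Xᵀ * X)) := by
  rw [frobenius_norm_def, Real.sqrt_eq_rpow, trace, Finset.sum_comm]
  simp [mul_apply, Real.norm_eq_abs, sq_abs, ← sq]

theorem norm_le_frobenius_norm_of_mulVec_eq_smul {𝕜 : Type*} [RCLike 𝕜] {A : Matrix n n 𝕜}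
    {v : n → 𝕜} (hv : v ≠ 0) {μ : 𝕜} (h : A *ᵥ v = μ • v) : ‖μ‖ ≤ ‖A‖ := by
  have hV : 0 < ‖replicateCol Unit v‖ := norm_pos_iff.2 (by simpa using hv)
  refine le_of_mul_le_mul_right ?_ hV
  calc ‖μ‖ * ‖replicateCol Unit v‖ = ‖A * replicateCol Unit v‖ := by
        rw [← norm_smul, ← replicateCol_smul, ← h, replicateCol_mulVec]
    _ ≤ ‖A‖ * ‖replicateCol Unit v‖ := frobenius_norm_mul _ _

theorem pow_mulVec_eq_smul {R : Type*} [CommRing R] [DecidableEq n] {A : Matrix n n R}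
    {v : n → R} {μ : R} (h : A *ᵥ v = μ • v) (k : ℕ) : (A ^ k) *ᵥ v = μ ^ k • v := by
  induction k with
  | zero => simp
  | succ k ih => rw [pow_succ, ← mulVec_mulVec, h, mulVec_smul, ih, smul_smul, pow_succ']

theorem inv_mulVec_eq_smul {K : Type*} [Field K] [DecidableEq n] {A : Matrix n n K}
    (hA : IsUnit A) {v : n → K} {μ : K} (hμ : μ ≠ 0) (h : A *ᵥ v = μ • v) :
    A⁻¹ *ᵥ v = μ⁻¹ • v := by
  rw [← inv_smul_smul₀ hμ (A⁻¹ *ᵥ v), ← mulVec_smul, ← h, mulVec_mulVec,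
    nonsing_inv_mul _ ((isUnit_iff_isUnit_det A).1 hA), one_mulVec]

variable [DecidableEq m]

theorem frobenius_norm_mul_of_transpose_mul_eq_one {U : Matrix m m ℝ} (hU : Uᵀ * U = 1)
    (X : Matrix m n ℝ) : ‖U * X‖ = ‖X‖ := by
  rw [frobenius_norm_eq_sqrt_trace, frobenius_norm_eq_sqrt_trace, transpose_mul,
    Matrix.mul_assoc, ← Matrix.mul_assoc Uᵀ, hU, Matrix.one_mul]

theorem mul_frobenius_norm_le_diagonal_mul {𝕜 : Type*} [RCLike 𝕜] {v : m → 𝕜} {c : ℝ}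
    (hc : 0 ≤ c) (hv : ∀ i, c ≤ ‖v i‖) (X : Matrix m n 𝕜) : c * ‖X‖ ≤ ‖diagonal v * X‖ := by
  rw [← Real.norm_of_nonneg hc, ← norm_smul]
  refine frobenius_norm_le_of_norm_apply_le fun i j => ?_
  rw [smul_apply, diagonal_mul, norm_smul, norm_mul, Real.norm_of_nonneg hc]
  gcongr
  exact hv i

theorem IsHermitian.mul_frobenius_norm_le_mul {A : Matrix m m ℝ} (hA : A.IsHermitian) {c : ℝ}
    (hc : 0 ≤ c) (h : ∀ i, c ≤ |hA.eigenvalues i|) (X : Matrix m n ℝ) :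
    c * ‖X‖ ≤ ‖A * X‖ := by
  set U : Matrix m m ℝ := (hA.eigenvectorUnitary : Matrix m m ℝ)
  have hA' : A = U * diagonal hA.eigenvalues * Uᵀ := by
    conv_lhs => rw [hA.spectral_theorem]
    simp [U, Unitary.conjStarAlgAut_apply, star_eq_conjTranspose,
      conjTranspose_eq_transpose_of_trivial]
  have hU : Uᵀ * U = 1 := by
    simpa [U, star_eq_conjTranspose, conjTranspose_eq_transpose_of_trivial] using
      Unitary.coe_star_mul_self hA.eigenvectorUnitary
  have hUt : Uᵀᵀ * Uᵀ = 1 := by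
    simpa [U, star_eq_conjTranspose, conjTranspose_eq_transpose_of_trivial] using
      Unitary.coe_mul_star_self hA.eigenvectorUnitary
  calc c * ‖X‖ = c * ‖Uᵀ * X‖ := by rw [frobenius_norm_mul_of_transpose_mul_eq_one hUt]
    _ ≤ ‖diagonal hA.eigenvalues * (Uᵀ * X)‖ := mul_frobenius_norm_le_diagonal_mul hc h _
    _ = ‖U * (diagonal hA.eigenvalues * (Uᵀ * X))‖ := by
      rw [frobenius_norm_mul_of_transpose_mul_eq_one hU]
    _ = ‖A * X‖ := by
      conv_rhs => rw [hA']
      simp only [Matrix.mul_assoc]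

namespace PosDef

variable {P : Matrix m m ℝ} (hP : P.PosDef)
include hP

theorem le_eigenvalues_of_norm_sub_inv_pow_three_le {B c : ℝ} (hc : 0 < c)
    (hroot : c ^ 4 + B * c ^ 3 - 1 = 0) (h : ‖P - P⁻¹ ^ 3‖ ≤ B) (i : m) :
    c ≤ hP.1.eigenvalues i := by
  have hpos := hP.eigenvalues_pos i
  have hv : ⇑(hP.1.eigenvectorBasis i) ≠ 0 := by
    simpa using hP.1.eigenvectorBasis.orthonormal.ne_zero i
  have hPv := hP.1.mulVec_eigenvectorBasis i
  refine le_of_abs_sub_inv_pow_three_le hc hroot hpos (le_trans ?_ h)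
  refine norm_le_frobenius_norm_of_mulVec_eq_smul hv ?_
  rw [sub_mulVec, hPv, pow_mulVec_eq_smul (inv_mulVec_eq_smul hP.isUnit hpos.ne' hPv), sub_smul]

theorem frobenius_norm_inv_mul_le {c : ℝ} (hc : 0 < c) (h : ∀ i, c ≤ hP.1.eigenvalues i)
    (X : Matrix m n ℝ) : ‖P⁻¹ * X‖ ≤ c⁻¹ * ‖X‖ := by
  rw [← div_eq_inv_mul, le_div_iff₀' hc]
  calc c * ‖P⁻¹ * X‖ ≤ ‖P * (P⁻¹ * X)‖ :=
        hP.1.mul_frobenius_norm_le_mul hc.le (fun i => (h i).trans (le_abs_self _)) _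
    _ = ‖X‖ := by rw [mul_nonsing_inv_cancel_left _ _ ((isUnit_iff_isUnit_det P).1 hP.isUnit)]

theorem frobenius_norm_mul_inv_le {c : ℝ} (hc : 0 < c) (h : ∀ i, c ≤ hP.1.eigenvalues i)
    (X : Matrix n m ℝ) : ‖X * P⁻¹‖ ≤ c⁻¹ * ‖X‖ := by
  have hPt : Pᵀ = P := (isHermitian_iff_isSymm.1 hP.1).eq
  rw [← frobenius_norm_transpose, transpose_mul, transpose_nonsing_inv, hPt,
    ← frobenius_norm_transpose X]
  exact hP.frobenius_norm_inv_mul_le hc h Xᵀ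

end PosDef

theorem inv_pow_three_sub_inv_pow_three {K : Type*} [Field K] [DecidableEq n]
    {A B : Matrix n n K} (hA : IsUnit A) (hB : IsUnit B) :
    A⁻¹ ^ 3 - B⁻¹ ^ 3 =
      A⁻¹ ^ 3 * (B - A) * B⁻¹ + A⁻¹ ^ 2 * (B - A) * B⁻¹ ^ 2 + A⁻¹ * (B - A) * B⁻¹ ^ 3 := by
  have h := inv_sub_inv (iff_of_true hA hB)
  calc A⁻¹ ^ 3 - B⁻¹ ^ 3
      = A⁻¹ ^ 2 * (A⁻¹ - B⁻¹) + A⁻¹ * (A⁻¹ - B⁻¹) * B⁻¹ + (A⁻¹ - B⁻¹) * B⁻¹ ^ 2 := by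
        noncomm_ring
    _ = _ := by rw [h]; noncomm_ring

theorem frobenius_norm_inv_pow_three_sub_le {A B : Matrix m m ℝ} (hA : IsUnit A) (hB : IsUnit B)
    {k : ℝ} (hk : 0 ≤ k) (hAk : ∀ X, ‖A⁻¹ * X‖ ≤ k * ‖X‖) (hBk : ∀ X, ‖X * B⁻¹‖ ≤ k * ‖X‖) :
    ‖A⁻¹ ^ 3 - B⁻¹ ^ 3‖ ≤ 3 * k ^ 4 * ‖A - B‖ := by
  have hterm (i j : ℕ) (X : Matrix m m ℝ) : ‖A⁻¹ ^ i * X * B⁻¹ ^ j‖ ≤ k ^ (i + j) * ‖X‖ := by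
    calc ‖A⁻¹ ^ i * X * B⁻¹ ^ j‖ = ‖(A⁻¹ * ·)^[i] ((· * B⁻¹)^[j] X)‖ := by
          rw [mul_left_iterate, mul_right_iterate, Matrix.mul_assoc]
      _ ≤ k ^ i * (k ^ j * ‖X‖) :=
          (norm_iterate_le hk hAk i _).trans (by gcongr; exact norm_iterate_le hk hBk j X)
      _ = k ^ (i + j) * ‖X‖ := by ring
  rw [inv_pow_three_sub_inv_pow_three hA hB, norm_sub_rev A]
  refine norm_add₃_le.trans ?_
  have h1 := hterm 3 1 (B - A)
  have h2 := hterm 2 2 (B - A)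
  have h3 := hterm 1 3 (B - A)
  rw [pow_one] at h1 h3
  linarith

end Matrix

theorem frobNorm_eq_norm {d : ℕ} (X : Matrix (Fin d) (Fin d) ℝ) : frobNorm X = ‖X‖ :=
  (frobenius_norm_eq_sqrt_trace X).symm

theorem gradient_local_lipschitz_symmetric_dirichlet_general (d : ℕ) (B c : ℝ)
    (hc : 0 < c) (hroot : c ^ 4 + B * c ^ 3 - 1 = 0)
    (P Q : Matrix (Fin d) (Fin d) ℝ) (hP : P.PosDef) (hQ : Q.PosDef)
    (hPgrad : frobNorm (P - (P⁻¹) ^ 3) ≤ B) (hQgrad : frobNorm (Q - (Q⁻¹) ^ 3) ≤ B) :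
    frobNorm ((P - (P⁻¹) ^ 3) - (Q - (Q⁻¹) ^ 3)) ≤
      (1 + 3 * Real.sqrt d / c ^ 4) * frobNorm (P - Q) := by
  simp only [frobNorm_eq_norm] at hPgrad hQgrad ⊢
  have hPeig := hP.le_eigenvalues_of_norm_sub_inv_pow_three_le hc hroot hPgrad
  have hQeig := hQ.le_eigenvalues_of_norm_sub_inv_pow_three_le hc hroot hQgrad
  have hcube := frobenius_norm_inv_pow_three_sub_le hP.isUnit hQ.isUnit (inv_nonneg.2 hc.le)
    (hP.frobenius_norm_inv_mul_le hc hPeig) (hQ.frobenius_norm_mul_inv_le hc hQeig)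
  calc ‖(P - P⁻¹ ^ 3) - (Q - Q⁻¹ ^ 3)‖ = ‖(P - Q) - (P⁻¹ ^ 3 - Q⁻¹ ^ 3)‖ := by
        congr 1; abel
    _ ≤ ‖P - Q‖ + 3 * c⁻¹ ^ 4 * ‖P - Q‖ := (norm_sub_le _ _).trans (by gcongr)
    _ = (1 + 3 / c ^ 4) * ‖P - Q‖ := by field_simp
    _ ≤ (1 + 3 * √d / c ^ 4) * ‖P - Q‖ := by
      rcases d.eq_zero_or_pos with rfl | hd
      · simp [Subsingleton.elim (P - Q) 0]
      · gcongr
        exact le_mul_of_one_le_right zero_le_three (Real.one_le_sqrt.2 (by exact_mod_cast hd))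

/-- Lemma 5.1, symmetric Dirichlet case: if `c > 0` satisfies
`c⁴ + Bc³ − 1 = 0` and `P`, `Q` are symmetric positive definite with
`‖P − P⁻³‖ ≤ B` and `‖Q − Q⁻³‖ ≤ B` (Frobenius norm, `P⁻³ = (P⁻¹)³`), then the
gradient `∇f_D(X) = X − X⁻³` of the symmetric Dirichlet energy satisfies
`‖(P − P⁻³) − (Q − Q⁻³)‖ ≤ (1 + 3√d/c⁴) ‖P − Q‖`. -/
theorem gradient_local_lipschitz_symmetric_dirichlet (d : ℕ) (B c : ℝ) (hB : 0 ≤ B)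
    (hc : 0 < c) (hroot : c ^ 4 + B * c ^ 3 - 1 = 0)
    (P Q : Matrix (Fin d) (Fin d) ℝ) (hP : P.PosDef) (hQ : Q.PosDef)
    (hPgrad : frobNorm (P - (P⁻¹) ^ 3) ≤ B) (hQgrad : frobNorm (Q - (Q⁻¹) ^ 3) ≤ B) :
    frobNorm ((P - (P⁻¹) ^ 3) - (Q - (Q⁻¹) ^ 3)) ≤
      (1 + 3 * Real.sqrt d / c ^ 4) * frobNorm (P - Q) :=
  gradient_local_lipschitz_symmetric_dirichlet_general d B c hc hroot P Q hP hQ hPgrad hQgrad
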